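/- arXiv:1801.02071 — 3 statements merged into one kernel-verified Lean document; each statement's English description precedes it below -/
import Mathlib

section
/- Let L = V ⊕ W be a color gLt-algebra admitting a μ-quasi-multiplicative basis of W ≠ 0. If L is centerless and V is tight, then L = ⊕_k 𝔍_k is the direct sum of the family of its minimal color gLt-ideals, each admitting a μ-quasi-multiplicative basis inherited from that of L; concretely the 𝔍_k are the ideals 𝔍_{[i]} = V_{[i]} ⊕ W_{[i]} indexed by the connection classes [i] ∈ I/∼. -/
set_option maxHeartbeats 1000000

/-- A (color) generalized Lie-type algebra: an `(n+2)`-ary `G`-graded algebra with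
bicharacter `epsilon` satisfying the (colored) generalized Lie-type identities with
structure constants `alpha` (allowed to depend on the degrees of the arguments). -/
structure ColorGLT (F : Type) [Field F] (G : Type) [AddCommGroup G] [DecidableEq G]
    (L : Type) [AddCommGroup L] [Module F L] (n : ℕ) where
  bracket : MultilinearMap F (fun _ : Fin (n + 2) => L) L
  grading : G → Submodule F L
  isInternal : DirectSum.IsInternal grading
  bracket_graded : ∀ (g : Fin (n + 2) → G) (x : Fin (n + 2) → L),
    (∀ t, x t ∈ grading (g t)) → bracket x ∈ grading (∑ t, g t)
  epsilon : G → G → F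
  epsilon_ne_zero : ∀ g h, epsilon g h ≠ 0
  epsilon_add_left : ∀ g h k, epsilon (g + h) k = epsilon g k * epsilon h k
  epsilon_add_right : ∀ g h k, epsilon k (g + h) = epsilon k g * epsilon k h
  epsilon_skew : ∀ g h, epsilon g h * epsilon h g = 1
  alpha : Fin (n + 2) → Fin (n + 2) → Fin (n + 2) → Equiv.Perm (Fin (n + 2)) →
      Equiv.Perm (Fin (n + 1)) → (Fin (n + 2) → G) → (Fin (n + 1) → G) → F
  glt : ∀ (k : Fin (n + 2)) (gx : Fin (n + 2) → G) (gy : Fin (n + 1) → G)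
      (x : Fin (n + 2) → L) (y : Fin (n + 1) → L),
      (∀ t, x t ∈ grading (gx t)) → (∀ t, y t ∈ grading (gy t)) →
      bracket (Fin.insertNth k (bracket x) y) =
        ∑ i : Fin (n + 2), ∑ j : Fin (n + 2), ∑ σ₁ : Equiv.Perm (Fin (n + 2)),
          ∑ σ₂ : Equiv.Perm (Fin (n + 1)),
            alpha i j k σ₁ σ₂ gx gy •
              bracket (Function.update (fun t => x (σ₁ t)) i
                (bracket (Fin.insertNth j (x (σ₁ i)) (fun t => y (σ₂ t)))))

namespace ColorGLT

variable {F : Type} [Field F] {G : Type} [AddCommGroup G] [DecidableEq G]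
    {L : Type} [AddCommGroup L] [Module F L] {n : ℕ}

/-- A color gLt-ideal: a graded subspace `S` with `⟨S, L, …, L⟩_σ ⊆ S` for all `σ ∈ Sₙ`. -/
def IsIdeal (A : ColorGLT F G L n) (S : Submodule F L) : Prop :=
  (S = ⨆ g : G, S ⊓ A.grading g) ∧
  ∀ (σ : Equiv.Perm (Fin (n + 2))) (x : Fin (n + 2) → L),
    x 0 ∈ S → A.bracket (fun t => x (σ t)) ∈ S

/-- `L` is centerless: `Z(L) = {x : ⟨x, L, …, L⟩_σ = 0 ∀ σ} = 0`. -/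
def Centerless (A : ColorGLT F G L n) : Prop :=
  ∀ x : L, (∀ (σ : Equiv.Perm (Fin (n + 2))) (y : Fin (n + 2) → L),
    y 0 = x → A.bracket (fun t => y (σ t)) = 0) → x = 0

end ColorGLT

/-- A quasi-multiplicative basis of a color gLt-algebra: `L = V ⊕ W`, with a homogeneous
basis `{e i}` of `W ≠ 0` satisfying the three quasi-multiplicativity conditions. -/
structure QMBasis {F : Type} [Field F] {G : Type} [AddCommGroup G] [DecidableEq G]
    {L : Type} [AddCommGroup L] [Module F L] {n : ℕ}
    (A : ColorGLT F G L n) (I : Type) where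
  V : Submodule F L
  W : Submodule F L
  compl : IsCompl V W
  W_ne_bot : W ≠ ⊥
  V_graded : V = ⨆ g : G, V ⊓ A.grading g
  W_graded : W = ⨆ g : G, W ⊓ A.grading g
  e : I → L
  deg : I → G
  e_homog : ∀ i, e i ∈ A.grading (deg i)
  e_indep : LinearIndependent F e
  e_span : Submodule.span F (Set.range e) = W
  qm1 : ∀ c : Fin (n + 2) → I,
    (∃ j, A.bracket (fun t => e (c t)) ∈ Submodule.span F {e j}) ∨
      A.bracket (fun t => e (c t)) ∈ V
  qm2 : ∀ (σ : Equiv.Perm (Fin (n + 2))) (S : Finset (Fin (n + 2))),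
    S.Nonempty → S ≠ Finset.univ → ∀ ind : Fin (n + 2) → I, ∃ j : I,
      ∀ x : Fin (n + 2) → L, (∀ t, t ∈ S → x t = e (ind t)) →
        (∀ t, t ∉ S → x t ∈ V) →
        A.bracket (fun t => x (σ t)) ∈ Submodule.span F {e j}
  qm3 : (∃ j, ∀ x : Fin (n + 2) → L, (∀ t, x t ∈ V) →
          A.bracket x ∈ Submodule.span F {e j}) ∨
        (∀ x : Fin (n + 2) → L, (∀ t, x t ∈ V) → A.bracket x ∈ V)

namespace QMBasis

variable {F : Type} [Field F] {G : Type} [AddCommGroup G] [DecidableEq G]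
    {L : Type} [AddCommGroup L] [Module F L] {n : ℕ} {I : Type}
    {A : ColorGLT F G L n}

/-- The set of elements represented by an index of `𝔉 = I ∪ {v}`: `e i` for `some i`,
the subspace `V` for `none` (= `v`). -/
def elemSet (B : QMBasis A I) : Option I → Set L
  | none => (B.V : Set L)
  | some i => {B.e i}

/-- The target set of an index of `𝔉`: the line `𝔽 e j` for `some j`, `V` for `v`. -/
def targetSet (B : QMBasis A I) : Option I → Set L
  | none => (B.V : Set L)
  | some j => (Submodule.span F {B.e j} : Set L)

/-- `x ∈ a_σ(c)`: the `σ`-permuted product of the elements represented by `c` is nonzero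
and lands in the target represented by `x`; the value `v` is only allowed for all-basis
or all-`V` tuples. -/
def aMem (B : QMBasis A I) (σ : Equiv.Perm (Fin (n + 2)))
    (c : Fin (n + 2) → Option I) (x : Option I) : Prop :=
  (∃ z : Fin (n + 2) → L, (∀ t, z t ∈ B.elemSet (c (σ t))) ∧ A.bracket z ≠ 0) ∧
  (∀ z : Fin (n + 2) → L, (∀ t, z t ∈ B.elemSet (c (σ t))) → A.bracket z ∈ B.targetSet x) ∧
  (x = none → ((∀ t, (c t).isSome = true) ∨ (∀ t, c t = none)))

/-- An admissible `(n+1)`-tuple over `𝔉 ∪ 𝔉̄`: all entries barred (`true`) or all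
unbarred (`false`). -/
abbrev Tup (I : Type) (n : ℕ) := Bool × (Fin (n + 1) → Option I)

/-- `x ∈ μ(j, X)` where `j ∈ 𝔉 ∪ 𝔉̄` (left = unbarred, right = barred) and `X` is an
admissible tuple; defined via `a_σ` and `b_σ` as in the paper. -/
def muMem (B : QMBasis A I) :
    Option I ⊕ Option I → Tup I n → Option I → Prop
  | Sum.inl j, (false, c), x => ∃ σ : Equiv.Perm (Fin (n + 2)), B.aMem σ (Fin.cons j c) x
  | Sum.inl j, (true, c), x => ∃ σ : Equiv.Perm (Fin (n + 2)), B.aMem σ (Fin.cons x c) j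
  | Sum.inr j, (false, c), x =>
      ∃ (k : Fin (n + 1)) (σ : Equiv.Perm (Fin (n + 2))),
        B.aMem σ (Fin.cons x (Fin.cons j (fun t => c (k.succAbove t)))) (c k)
  | Sum.inr _, (true, _), _ => False

/-- The map `φ : P(I ∪ Ī) × T → P(I ∪ Ī)`, `φ(J, X) = K ∪ K̄` with
`K = (⋃_{j ∈ J} μ(j, X)) \ {v}` (left = `I`, right = `Ī`). -/
def phi (B : QMBasis A I) (J : Set (I ⊕ I)) (X : Tup I n) : Set (I ⊕ I) :=
  {p | ∃ i : I, (p = Sum.inl i ∨ p = Sum.inr i) ∧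
    ∃ j ∈ J, B.muMem (Sum.map some some j) X (some i)}

/-- Iterated application of `φ` along a list of tuples. -/
def chain (B : QMBasis A I) : Set (I ⊕ I) → List (Tup I n) → Set (I ⊕ I)
  | s, [] => s
  | s, X :: r => chain B (B.phi s X) r

/-- The connection relation: `i` is connected to `j`. -/
def Connected (B : QMBasis A I) (i j : I) : Prop :=
  i = j ∨ ∃ (Xs : List (Tup I n)) (st : I ⊕ I),
    Xs ≠ [] ∧ (st = Sum.inl i ∨ st = Sum.inr i) ∧
    (∀ m, m < Xs.length → (chain B {st} (List.take m Xs)).Nonempty) ∧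
    Sum.inl j ∈ chain B {st} Xs

/-- The connection class `[i]` of `i`. -/
def cls (B : QMBasis A I) (i : I) : Set I := {j | B.Connected i j}

/-- `W_{[i]} = ⊕_{j ∈ [i]} 𝔽 e_j`. -/
def Wcls (B : QMBasis A I) (i : I) : Submodule F L :=
  Submodule.span F (B.e '' B.cls i)

/-- `V_{[i]} = (Σ_{i₁,…,iₙ ∈ [i]} 𝔽⟨e_{i₁},…,e_{iₙ}⟩) ∩ V`. -/
def Vcls (B : QMBasis A I) (i : I) : Submodule F L :=
  Submodule.span F {z : L | ∃ c : Fin (n + 2) → I,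
    (∀ t, c t ∈ B.cls i) ∧ z = A.bracket (fun t => B.e (c t))} ⊓ B.V

/-- `𝔍_{[i]} = V_{[i]} ⊕ W_{[i]}`. -/
def Jcls (B : QMBasis A I) (i : I) : Submodule F L := B.Vcls i ⊔ B.Wcls i

/-- `S` admits a quasi-multiplicative basis inherited from that of `L`:
`S = V_S ⊕ W_S` with `V_S ⊆ V` and `W_S ≠ 0` spanned by a subset of the `e i`. -/
def HasInheritedBasis (B : QMBasis A I) (S : Submodule F L) : Prop :=
  ∃ (V' : Submodule F L) (J' : Set I), V' ≤ B.V ∧ J'.Nonempty ∧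
    S = V' ⊔ Submodule.span F (B.e '' J')

/-- `V` is tight: `V = 0` or `V = Σ_{μ(i₁,…,iₙ) = {v}} 𝔽⟨e_{i₁},…,e_{iₙ}⟩`. -/
def Tight (B : QMBasis A I) : Prop :=
  B.V = ⊥ ∨
    B.V = Submodule.span F {z : L | ∃ c : Fin (n + 2) → I,
      ({x : Option I | ∃ σ, B.aMem σ (fun t => some (c t)) x} = {none}) ∧
      z = A.bracket (fun t => B.e (c t))}

/-- The set of elements represented by `u_{k}`: `u_k = e_k + e_{k̄}` (`= e` of the
underlying index, since `e_{j̄} = 0`) if `k ∉ {v, v̄}`, and `u_k = V` otherwise. -/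
def uSet (B : QMBasis A I) : Option I ⊕ Option I → Set L
  | Sum.inl none => (B.V : Set L)
  | Sum.inr none => (B.V : Set L)
  | Sum.inl (some i) => {B.e i}
  | Sum.inr (some i) => {B.e i}

/-- The full `(n+2)`-tuple `(k₁, …, kₙ)` over `𝔉 ∪ 𝔉̄` obtained from a first entry and
an admissible tuple. -/
def fullTup {I : Type} {n : ℕ} (k₁ : Option I ⊕ Option I) (X : Tup I n) :
    Fin (n + 2) → Option I ⊕ Option I :=
  Fin.cons k₁ (fun t => if X.1 then Sum.inr (X.2 t) else Sum.inl (X.2 t))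

/-- The basis is `μ`-quasi-multiplicative: whenever `i ∈ μ(k₁, …, kₙ)` then
`e i ∈ 𝔽⟨u_{k₁}, …, u_{kₙ}⟩_σ` for some `σ ∈ Sₙ`. -/
def MuQM (B : QMBasis A I) : Prop :=
  ∀ (k₁ : Option I ⊕ Option I) (X : Tup I n) (i : I),
    B.muMem k₁ X (some i) →
    ∃ (σ : Equiv.Perm (Fin (n + 2))) (z : Fin (n + 2) → L),
      (∀ t, z t ∈ B.uSet (fullTup k₁ X (σ t))) ∧
      B.e i ∈ Submodule.span F {A.bracket z}

end QMBasis

/-!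
Everything rests on a dichotomy given by quasi-multiplicativity: a nonzero product of
elements of `V` and basis vectors, one of them `e m`, is either a multiple of a single `e j`,
and then each of its basis entries is connected to `j`, or it lies in `V`, all its entries are
basis vectors and these are pairwise connected. Hence `𝔍_{[i]}` is spanned by the `e j`,
`j ∈ [i]`, and by the products of such basis vectors that lie in `V`; and the gLt identity
rewrites a product with an entry `⟨e_{c₁}, …, e_{cₙ}⟩ ∈ V` as a combination of products whose
innermost bracket has a basis entry `e_{cₖ}`. These two facts show that `𝔍_{[i]}` absorbs
products and that a product with entries in `𝔍_{[a]}` and `𝔍_{[b]}`, `a ≁ b`, vanishes. As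
tightness makes the `𝔍_{[i]}` span `L`, an element of `𝔍_{[i]} ∩ Σ_{j ≁ i} 𝔍_{[j]}` is central,
hence zero.

Connection is the reflexive-transitive closure of a symmetric one-step relation, and
`μ`-quasi-multiplicativity says exactly that an ideal containing `e a` contains `e b` when `b`
is one step from `a`; so an ideal of `𝔍_{[i]}` containing one `e j` is all of `𝔍_{[i]}`.
-/

namespace MultilinearMap

variable {R M N ι : Type*} [CommSemiring R] [AddCommMonoid M] [Module R M]
  [AddCommMonoid N] [Module R N]

theorem map_mem_of_forall_mem_span [Fintype ι] [DecidableEq ι]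
    (f : MultilinearMap R (fun _ : ι => M) N) {s : ι → Set M} {S : Submodule R N}
    (h : ∀ z : ι → M, (∀ i, z i ∈ s i) → f z ∈ S) {m : ι → M}
    (hm : ∀ i, m i ∈ Submodule.span R (s i)) : f m ∈ S := by
  suffices key : ∀ (T : Finset ι) (z : ι → M), (∀ i, z i ∈ Submodule.span R (s i)) →
      (∀ i ∉ T, z i ∈ s i) → f z ∈ S from
    key Finset.univ m hm fun i hi => absurd (Finset.mem_univ i) hi
  intro T
  induction T using Finset.induction_on with
  | empty => exact fun z _ hz => h z fun i => hz i (Finset.notMem_empty i)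
  | insert a T _ ih =>
    intro z hspan hz
    have hle : Submodule.span R (s a) ≤ S.comap (f.toLinearMap z a) := by
      refine Submodule.span_le.mpr fun v hv => ih _ (fun i => ?_) (fun i hi => ?_)
      · rcases eq_or_ne i a with rfl | hia
        · simpa using Submodule.subset_span hv
        · simpa [hia] using hspan i
      · rcases eq_or_ne i a with rfl | hia
        · simpa using hv
        · simpa [hia] using hz i (by simp [hia, hi])
    simpa using hle (hspan a)

end MultilinearMap

theorem Submodule.span_eq_iSup_inf_of_forall_exists_mem {R M ι : Type*} [Semiring R]
    [AddCommMonoid M] [Module R M] (𝒜 : ι → Submodule R M) {s : Set M}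
    (hs : ∀ x ∈ s, ∃ g, x ∈ 𝒜 g) : span R s = ⨆ g, span R s ⊓ 𝒜 g := by
  refine le_antisymm (span_le.mpr fun x hx => ?_) (iSup_le fun g => inf_le_left)
  obtain ⟨g, hg⟩ := hs x hx
  exact le_iSup (fun g => span R s ⊓ 𝒜 g) g ⟨subset_span hx, hg⟩

namespace ColorGLT

variable {F : Type} [Field F] {G : Type} [AddCommGroup G] [DecidableEq G]
    {L : Type} [AddCommGroup L] [Module F L] {n : ℕ} {A : ColorGLT F G L n}

theorem IsIdeal.bracket_mem {S : Submodule F L} (hS : A.IsIdeal S) {w : Fin (n + 2) → L}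
    {p : Fin (n + 2)} (hp : w p ∈ S) : A.bracket w ∈ S := by
  simpa using hS.2 (Equiv.swap 0 p) (fun t => w (Equiv.swap 0 p t)) (by simpa using hp)

theorem isIdeal_of_bracket_mem {S : Submodule F L} (hS : S = ⨆ g, S ⊓ A.grading g)
    (h : ∀ (w : Fin (n + 2) → L) (p : Fin (n + 2)), w p ∈ S → A.bracket w ∈ S) :
    A.IsIdeal S :=
  ⟨hS, fun σ x hx => h _ (σ.symm 0) (by simpa using hx)⟩

theorem bracket_insertNth_bracket_mem (S : Submodule F L) (k : Fin (n + 2))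
    {x : Fin (n + 2) → L} {y : Fin (n + 1) → L} (hx : ∀ t, ∃ g, x t ∈ A.grading g)
    (hy : ∀ t, ∃ g, y t ∈ A.grading g)
    (h : ∀ (i j : Fin (n + 2)) (σ₁ : Equiv.Perm (Fin (n + 2))) (σ₂ : Equiv.Perm (Fin (n + 1))),
      A.bracket (Function.update (fun t => x (σ₁ t)) i
        (A.bracket (Fin.insertNth j (x (σ₁ i)) fun t => y (σ₂ t)))) ∈ S) :
    A.bracket (Fin.insertNth k (A.bracket x) y) ∈ S := by
  choose gx hgx using hx
  choose gy hgy using hy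
  rw [A.glt k gx gy x y hgx hgy]
  exact Submodule.sum_mem _ fun i _ => Submodule.sum_mem _ fun j _ =>
    Submodule.sum_mem _ fun σ₁ _ => Submodule.sum_mem _ fun σ₂ _ =>
      Submodule.smul_mem _ _ (h i j σ₁ σ₂)

end ColorGLT

namespace QMBasis

variable {F : Type} [Field F] {G : Type} [AddCommGroup G] [DecidableEq G]
    {L : Type} [AddCommGroup L] [Module F L] {n : ℕ} {I : Type}
    {A : ColorGLT F G L n} (B : QMBasis A I)

section Connection

def Step (a b : I) : Prop :=
  ∃ X : Tup I n, B.muMem (Sum.inl (some a)) X (some b) ∨ B.muMem (Sum.inr (some a)) X (some b)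

variable {B}

theorem step_of_muMem {j : I ⊕ I} {X : Tup I n} {i : I}
    (h : B.muMem (Sum.map some some j) X (some i)) : B.Step (Sum.elim id id j) i := by
  cases j with
  | inl a => exact ⟨X, Or.inl h⟩
  | inr a => exact ⟨X, Or.inr h⟩

theorem chain_mono {s s' : Set (I ⊕ I)} (h : s ⊆ s') (Xs : List (Tup I n)) :
    B.chain s Xs ⊆ B.chain s' Xs := by
  induction Xs generalizing s s' with
  | nil => exact h
  | cons X r ih => exact ih fun _ ⟨i, hp, j, hj, hmu⟩ => ⟨i, hp, j, h hj, hmu⟩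

theorem reflTransGen_of_mem_chain {s : Set (I ⊕ I)} {Xs : List (Tup I n)} {p : I ⊕ I}
    (hp : p ∈ B.chain s Xs) :
    ∃ q ∈ s, Relation.ReflTransGen B.Step (Sum.elim id id q) (Sum.elim id id p) := by
  induction Xs generalizing s with
  | nil => exact ⟨p, hp, .refl⟩
  | cons X r ih =>
    obtain ⟨_, ⟨i, hi, j, hj, hmu⟩, hrt⟩ := ih hp
    refine ⟨j, hj, .head (step_of_muMem hmu) ?_⟩
    rcases hi with rfl | rfl <;> exact hrt

theorem connected_of_step_of_mem_chain {i k j : I} (hik : B.Step i k) {st : I ⊕ I}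
    (hst : st = Sum.inl k ∨ st = Sum.inr k) {Xs : List (Tup I n)}
    (hpre : ∀ m, m < Xs.length → (B.chain {st} (Xs.take m)).Nonempty)
    (hj : Sum.inl j ∈ B.chain {st} Xs) : B.Connected i j := by
  obtain ⟨X, hX⟩ := hik
  obtain ⟨x, hx, hmu⟩ : ∃ x : I ⊕ I, (x = Sum.inl i ∨ x = Sum.inr i) ∧
      B.muMem (Sum.map some some x) X (some k) := by
    rcases hX with h | h
    exacts [⟨_, Or.inl rfl, h⟩, ⟨_, Or.inr rfl, h⟩]
  have hsub : {st} ⊆ B.phi {x} X := by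
    rintro _ rfl
    exact ⟨k, hst, x, rfl, hmu⟩
  refine Or.inr ⟨X :: Xs, x, List.cons_ne_nil _ _, hx, fun m hm => ?_, chain_mono hsub Xs hj⟩
  cases m with
  | zero => exact ⟨x, rfl⟩
  | succ m =>
    obtain ⟨p, hp⟩ := hpre m (by simpa using hm)
    exact ⟨p, chain_mono hsub _ hp⟩

theorem connected_iff_reflTransGen {i j : I} :
    B.Connected i j ↔ Relation.ReflTransGen B.Step i j := by
  constructor
  · rintro (rfl | ⟨Xs, st, -, hst, -, hj⟩)
    · exact .refl
    · obtain ⟨q, rfl, hrt⟩ := reflTransGen_of_mem_chain hj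
      rcases hst with rfl | rfl <;> exact hrt
  · intro h
    induction h using Relation.ReflTransGen.head_induction_on with
    | refl => exact Or.inl rfl
    | head hik _ ih =>
      rcases ih with rfl | ⟨Xs, st, -, hst, hpre, hj⟩
      · exact connected_of_step_of_mem_chain (Xs := []) hik (Or.inl rfl) (by simp) rfl
      · exact connected_of_step_of_mem_chain hik hst hpre hj

theorem Connected.of_step {i j : I} (h : B.Step i j) : B.Connected i j :=
  connected_iff_reflTransGen.mpr (.single h)

theorem connected_refl (i : I) : B.Connected i i := Or.inl rfl

theorem Connected.trans {i j k : I} (hij : B.Connected i j) (hjk : B.Connected j k) :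
    B.Connected i k := by
  rw [connected_iff_reflTransGen] at *
  exact hij.trans hjk

theorem exists_aMem_comp_perm {d : Fin (n + 2) → Option I} {x : Option I}
    (h : ∃ σ, B.aMem σ d x) (π : Equiv.Perm (Fin (n + 2))) : ∃ σ, B.aMem σ (d ∘ π) x := by
  obtain ⟨σ, ⟨z, hz, hnz⟩, hall, hnone⟩ := h
  refine ⟨σ.trans π.symm, ⟨z, fun t => by simpa using hz t, hnz⟩,
    fun z' hz' => hall z' fun t => by simpa using hz' t, fun hx => ?_⟩
  rcases hnone hx with h | h
  exacts [Or.inl fun t => h (π t), Or.inr fun t => h (π t)]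

theorem cons_cons_comp_swap_zero_one {α : Type*} (a b : α) (r : Fin n → α) :
    (Fin.cons a (Fin.cons b r) : Fin (n + 2) → α) ∘ Equiv.swap 0 1 =
      Fin.cons b (Fin.cons a r) := by
  funext t
  refine Fin.cases ?_ (fun t => Fin.cases ?_ (fun u => ?_) t) t
  · simp
  · simp [Equiv.swap_apply_right]
  · simp [Equiv.swap_apply_of_ne_of_ne (Fin.succ_ne_zero _) (Fin.succ_succ_ne_one u)]

theorem Step.symm {a b : I} (h : B.Step a b) : B.Step b a := by
  -- `b ∈ μ(a, X)` and `a ∈ μ(b, X̄)` unfold to the same condition; for a barred start the two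
  -- leading slots are swapped.
  obtain ⟨⟨_ | _, c⟩, h | h⟩ := h
  · exact ⟨(true, c), Or.inl h⟩
  · obtain ⟨k, hk⟩ := h
    refine ⟨(false, c), Or.inr ⟨k, ?_⟩⟩
    rw [← cons_cons_comp_swap_zero_one]
    exact exists_aMem_comp_perm hk _
  · exact ⟨(false, c), Or.inl h⟩
  · exact h.elim

theorem Connected.symm {i j : I} (h : B.Connected i j) : B.Connected j i := by
  rw [connected_iff_reflTransGen] at *
  induction h with
  | refl => exact .refl
  | tail _ hst ih => exact ih.head hst.symm

theorem connected_of_aMem_some {d : Fin (n + 2) → Option I} {j : I}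
    (h : ∃ σ, B.aMem σ d (some j)) {s : Fin (n + 2)} {m : I} (hs : d s = some m) :
    B.Connected m j := by
  refine .of_step ⟨(false, s.removeNth d), Or.inl ?_⟩
  show ∃ σ, B.aMem σ (Fin.cons (some m) (s.removeNth d)) (some j)
  rw [← hs, Fin.cons_removeNth_eq_comp_cycleRange_symm]
  exact exists_aMem_comp_perm h _

theorem connected_of_aMem_none {d : Fin (n + 2) → Option I} (h : ∃ σ, B.aMem σ d none)
    {s t : Fin (n + 2)} {m m' : I} (hs : d s = some m) (ht : d t = some m') :
    B.Connected m m' := by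
  rcases eq_or_ne s t with rfl | hst
  · obtain rfl := Option.some.inj (hs.symm.trans ht)
    exact connected_refl m
  set π : Equiv.Perm (Fin (n + 2)) := (Equiv.swap 1 (Equiv.swap 0 t s)).trans (Equiv.swap 0 t)
  have hs' : Equiv.swap 0 t s ≠ 0 := by
    rw [Ne, Equiv.swap_apply_eq_iff, Equiv.swap_apply_left]
    exact hst
  have hπ0 : π 0 = t := by
    simp [π, Equiv.swap_apply_of_ne_of_ne zero_ne_one hs'.symm]
  have hπ1 : π 1 = s := by simp [π]
  -- `m' ∈ μ(m̄, X)` where `X` has `v` in the slot `k = 0` that serves as the target.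
  refine .of_step ⟨(false, Fin.cons none fun u => d (π u.succ.succ)), Or.inr ⟨0, ?_⟩⟩
  have hd : d ∘ π = Fin.cons (some m') (Fin.cons (some m) fun u => d (π u.succ.succ)) := by
    funext u
    refine Fin.cases ?_ (fun u => Fin.cases ?_ (fun u => ?_) u) u
    · simp [hπ0, ht]
    · simpa [hπ1] using hs
    · simp
  simpa [hd] using exists_aMem_comp_perm h π

end Connection

section Structure

def basisOrV : Set L := (B.V : Set L) ∪ Set.range B.e

def atoms : Set L := {x | x ∈ B.V ∧ ∃ g, x ∈ A.grading g} ∪ Set.range B.e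

def classProducts (i : I) : Set L :=
  {z | ∃ c : Fin (n + 2) → I, (∀ t, c t ∈ B.cls i) ∧ z = A.bracket fun t => B.e (c t)}

def classGen (i : I) : Set L := B.e '' B.cls i ∪ (B.classProducts i ∩ B.V)

theorem atoms_subset_basisOrV : B.atoms ⊆ B.basisOrV :=
  Set.union_subset_union_left _ fun _ hx => hx.1

theorem atoms_homogeneous {x : L} (hx : x ∈ B.atoms) : ∃ g, x ∈ A.grading g := by
  rcases hx with ⟨-, hg⟩ | ⟨m, rfl⟩
  exacts [hg, ⟨_, B.e_homog m⟩]

theorem span_atoms : Submodule.span F B.atoms = ⊤ := by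
  rw [eq_top_iff, ← B.compl.sup_eq_top]
  refine sup_le ?_ ?_
  · rw [B.V_graded]
    exact iSup_le fun g x hx => Submodule.subset_span
      (Or.inl ⟨(Submodule.mem_inf.mp hx).1, g, (Submodule.mem_inf.mp hx).2⟩)
  · rw [← B.e_span]
    exact Submodule.span_mono Set.subset_union_right

theorem classGen_subset_atoms (i : I) : B.classGen i ⊆ B.atoms := by
  rintro _ (⟨m, -, rfl⟩ | ⟨⟨c, -, rfl⟩, hV⟩)
  · exact Or.inr ⟨m, rfl⟩
  · exact Or.inl ⟨hV, _, A.bracket_graded _ _ fun t => B.e_homog (c t)⟩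

theorem insertNth_e_mem_atoms {z : Fin (n + 2) → L} (hz : ∀ t, z t ∈ B.atoms)
    (p j : Fin (n + 2)) (k : I) (σ : Equiv.Perm (Fin (n + 1))) :
    ∀ t, Fin.insertNth (α := fun _ => L) j (B.e k) (fun u => z (p.succAbove (σ u))) t ∈
      B.atoms :=
  (Fin.forall_iff_succAbove j).2 ⟨by simp [atoms], fun u => by simpa using hz _⟩

theorem exists_line_or_V {d : Fin (n + 2) → Option I} {s : Fin (n + 2)} (hs : (d s).isSome) :
    (∃ j, ∀ z : Fin (n + 2) → L, (∀ t, z t ∈ B.elemSet (d t)) →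
        A.bracket z ∈ Submodule.span F {B.e j}) ∨
      ((∀ t, (d t).isSome) ∧ ∀ z : Fin (n + 2) → L, (∀ t, z t ∈ B.elemSet (d t)) →
        A.bracket z ∈ B.V) := by
  by_cases hall : ∀ t, (d t).isSome
  · obtain ⟨c, rfl⟩ : ∃ c : Fin (n + 2) → I, d = fun t => some (c t) :=
      ⟨fun t => (d t).get (hall t), funext fun t => (Option.some_get _).symm⟩
    have hz : ∀ z : Fin (n + 2) → L, (∀ t, z t ∈ B.elemSet (some (c t))) →
        A.bracket z = A.bracket fun t => B.e (c t) :=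
      fun z hz => congrArg _ (funext hz)
    rcases B.qm1 c with ⟨j, hj⟩ | hj
    · exact Or.inl ⟨j, fun z h => hz z h ▸ hj⟩
    · exact Or.inr ⟨hall, fun z h => hz z h ▸ hj⟩
  · classical
    obtain ⟨t₁, ht₁⟩ := not_forall.mp hall
    obtain ⟨j, hj⟩ := B.qm2 1 (Finset.univ.filter fun t => (d t).isSome) ⟨s, by simpa using hs⟩
      (fun h => ht₁ (by
        have h₁ := Finset.mem_univ t₁
        rw [← h, Finset.mem_filter] at h₁
        exact h₁.2))
      (fun t => (d t).getD ((d s).get hs))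
    refine Or.inl ⟨j, fun z hz => hj z (fun t ht => ?_) (fun t ht => ?_)⟩
    · obtain ⟨a, ha⟩ := Option.isSome_iff_exists.mp (by simpa using ht)
      simpa [ha, elemSet] using hz t
    · have hdt : d t = none := by simpa using ht
      simpa [hdt, elemSet] using hz t

theorem exists_elemSet_of_basisOrV {z : Fin (n + 2) → L} (hz : ∀ t, z t ∈ B.basisOrV) :
    ∃ d : Fin (n + 2) → Option I,
      (∀ t, z t ∈ B.elemSet (d t)) ∧ ∀ t m, z t = B.e m → d t = some m := by
  classical
  refine ⟨fun t => if h : ∃ m, B.e m = z t then some h.choose else none, fun t => ?_,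
    fun t m hm => ?_⟩
  · dsimp only
    split_ifs with h
    · exact h.choose_spec.symm
    · exact ((Set.mem_union _ _ _).mp (hz t)).resolve_right h
  · have h : ∃ m', B.e m' = z t := ⟨m, hm.symm⟩
    simp only [dif_pos h]
    exact congrArg some (B.e_indep.injective (h.choose_spec.trans hm))

theorem bracket_mem_line_or_V {z : Fin (n + 2) → L} (hz : ∀ t, z t ∈ B.basisOrV)
    (hnz : A.bracket z ≠ 0) {s : Fin (n + 2)} {m : I} (hs : z s = B.e m) :
    (∃ j, A.bracket z ∈ Submodule.span F {B.e j} ∧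
        ∀ t m', z t = B.e m' → B.Connected m' j) ∨
      (A.bracket z ∈ B.V ∧ ∃ c : Fin (n + 2) → I, z = (fun t => B.e (c t)) ∧
        ∀ t t', B.Connected (c t) (c t')) := by
  obtain ⟨d, hzd, hd⟩ := B.exists_elemSet_of_basisOrV hz
  rcases B.exists_line_or_V (d := d) (s := s) (by rw [hd s m hs]; rfl) with ⟨j, hj⟩ | ⟨hall, hV⟩
  · have ha : ∃ σ, B.aMem σ d (some j) :=
      ⟨1, ⟨⟨z, hzd, hnz⟩, hj, fun h => absurd h (Option.some_ne_none j)⟩⟩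
    exact Or.inl ⟨j, hj z hzd, fun t m' h => connected_of_aMem_some ha (hd t m' h)⟩
  · have ha : ∃ σ, B.aMem σ d none := ⟨1, ⟨z, hzd, hnz⟩, hV, fun _ => Or.inl hall⟩
    have hdc : ∀ t, d t = some ((d t).get (hall t)) := fun t => (Option.some_get _).symm
    refine Or.inr ⟨hV z hzd, fun t => (d t).get (hall t), funext fun t => ?_,
      fun t t' => connected_of_aMem_none ha (hdc t) (hdc t')⟩
    have := hzd t
    rw [hdc t] at this
    exact this

theorem connected_of_bracket_ne_zero {z : Fin (n + 2) → L} (hz : ∀ t, z t ∈ B.basisOrV)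
    (hnz : A.bracket z ≠ 0) {p q : Fin (n + 2)} {m m' : I} (hp : z p = B.e m)
    (hq : z q = B.e m') : B.Connected m m' := by
  rcases B.bracket_mem_line_or_V hz hnz hp with ⟨j, -, hj⟩ | ⟨-, c, rfl, hc⟩
  · exact (hj p m hp).trans (hj q m' hq).symm
  · obtain rfl := B.e_indep.injective hp
    obtain rfl := B.e_indep.injective hq
    exact hc p q

theorem bracket_mem_V_or_line {z : Fin (n + 2) → L} (hz : ∀ t, z t ∈ B.basisOrV)
    {s : Fin (n + 2)} {m : I} (hs : z s = B.e m) :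
    A.bracket z ∈ B.V ∨ ∃ j, B.Connected m j ∧ A.bracket z ∈ Submodule.span F {B.e j} := by
  by_cases hnz : A.bracket z = 0
  · exact Or.inl (hnz ▸ B.V.zero_mem)
  rcases B.bracket_mem_line_or_V hz hnz hs with ⟨j, hj, hc⟩ | ⟨hV, -⟩
  exacts [Or.inr ⟨j, hc s m hs, hj⟩, Or.inl hV]

theorem bracket_mem_Jcls_of_basisOrV {z : Fin (n + 2) → L} (hz : ∀ t, z t ∈ B.basisOrV)
    {s : Fin (n + 2)} {i m : I} (hs : z s = B.e m) (him : B.Connected i m) :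
    A.bracket z ∈ B.Jcls i := by
  by_cases hnz : A.bracket z = 0
  · exact hnz ▸ (B.Jcls i).zero_mem
  rcases B.bracket_mem_line_or_V hz hnz hs with ⟨j, hj, hc⟩ | ⟨hV, c, rfl, hc⟩
  · refine (le_sup_right : B.Wcls i ≤ B.Jcls i)
      (Submodule.span_le.mpr (Set.singleton_subset_iff.mpr ?_) hj)
    exact Submodule.subset_span ⟨j, him.trans (hc s m hs), rfl⟩
  · obtain rfl := B.e_indep.injective hs
    exact (le_sup_left : B.Vcls i ≤ B.Jcls i) (Submodule.mem_inf.mpr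
      ⟨Submodule.subset_span ⟨c, fun t => him.trans (hc s t), rfl⟩, hV⟩)

theorem Jcls_eq_span_classGen (i : I) : B.Jcls i = Submodule.span F (B.classGen i) := by
  refine le_antisymm (sup_le (fun x hx => ?_) (Submodule.span_mono Set.subset_union_left))
    (Submodule.span_le.mpr (Set.union_subset ?_ ?_))
  · refine Submodule.span_le.mpr ?_ (Submodule.mem_inf.mp hx).1
    rintro _ ⟨c, hc, rfl⟩
    rcases B.bracket_mem_V_or_line (z := fun t => B.e (c t)) (fun t => Or.inr ⟨c t, rfl⟩)
      (s := 0) rfl with hV | ⟨j, hj, hline⟩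
    · exact Submodule.subset_span (Or.inr ⟨⟨c, hc, rfl⟩, hV⟩)
    · have hj : B.e j ∈ B.classGen i := Or.inl ⟨j, (hc 0).trans hj, rfl⟩
      exact Submodule.span_mono (Set.singleton_subset_iff.mpr hj) hline
  · exact Submodule.subset_span.trans (le_sup_right : B.Wcls i ≤ B.Jcls i)
  · exact fun x hx => (le_sup_left : B.Vcls i ≤ B.Jcls i)
      (Submodule.mem_inf.mpr ⟨Submodule.subset_span hx.1, hx.2⟩)

theorem bracket_mem_of_entry_eq_bracket {z : Fin (n + 2) → L} (hz : ∀ t, z t ∈ B.atoms)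
    {p : Fin (n + 2)} {c : Fin (n + 2) → I} (hzp : z p = A.bracket fun t => B.e (c t))
    (S : Submodule F L)
    (h : ∀ (i j : Fin (n + 2)) (σ₁ : Equiv.Perm (Fin (n + 2))) (σ₂ : Equiv.Perm (Fin (n + 1))),
      A.bracket (Function.update (fun t => B.e (c (σ₁ t))) i
        (A.bracket (Fin.insertNth j (B.e (c (σ₁ i))) fun u => z (p.succAbove (σ₂ u))))) ∈ S) :
    A.bracket z ∈ S := by
  rw [← Fin.insertNth_self_removeNth p z, hzp]
  exact A.bracket_insertNth_bracket_mem S p (fun t => ⟨_, B.e_homog (c t)⟩)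
    (fun u => B.atoms_homogeneous (hz _)) h

theorem bracket_mem_Jcls_of_classGen {i : I} {z : Fin (n + 2) → L} (hz : ∀ t, z t ∈ B.atoms)
    {p : Fin (n + 2)} (hp : z p ∈ B.classGen i) : A.bracket z ∈ B.Jcls i := by
  have hzb : ∀ t, z t ∈ B.basisOrV := fun t => B.atoms_subset_basisOrV (hz t)
  rcases hp with ⟨m, hm, hzp⟩ | ⟨⟨c, hc, hzp⟩, -⟩
  · exact B.bracket_mem_Jcls_of_basisOrV hzb hzp.symm hm
  refine B.bracket_mem_of_entry_eq_bracket hz hzp _ fun i₁ j σ₁ σ₂ => ?_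
  have hout : ∀ v ∈ B.basisOrV, ∀ t,
      Function.update (fun t => B.e (c (σ₁ t))) i₁ v t ∈ B.basisOrV := fun v hv =>
    (Function.forall_update_iff _ (fun _ x => x ∈ B.basisOrV)).2 ⟨hv, fun t _ => Or.inr ⟨_, rfl⟩⟩
  rcases B.bracket_mem_V_or_line
      (fun t => B.atoms_subset_basisOrV (B.insertNth_e_mem_atoms hz p j (c (σ₁ i₁)) σ₂ t))
      (Fin.insertNth_apply_same _ _ _) with hV | ⟨j₀, hj₀, hline⟩
  · obtain ⟨t₁, ht₁⟩ := exists_ne i₁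
    exact B.bracket_mem_Jcls_of_basisOrV (hout _ (Or.inl hV)) (s := t₁)
      (Function.update_of_ne ht₁ _ _) (hc _)
  · obtain ⟨a, ha⟩ := Submodule.mem_span_singleton.mp hline
    rw [← ha, MultilinearMap.map_update_smul]
    exact Submodule.smul_mem _ _ (B.bracket_mem_Jcls_of_basisOrV (hout _ (Or.inr ⟨j₀, rfl⟩))
      (s := i₁) (Function.update_self _ _ _) ((hc _).trans hj₀))

theorem bracket_mem_Jcls {i : I} {w : Fin (n + 2) → L} {p : Fin (n + 2)}
    (hp : w p ∈ B.Jcls i) : A.bracket w ∈ B.Jcls i := by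
  classical
  refine A.bracket.map_mem_of_forall_mem_span
    (s := Function.update (fun _ => B.atoms) p (B.classGen i)) (fun z hz => ?_) (fun t => ?_)
  · refine B.bracket_mem_Jcls_of_classGen (fun t => ?_) (p := p) (by simpa using hz p)
    rcases eq_or_ne t p with rfl | ht
    · exact B.classGen_subset_atoms i (by simpa using hz t)
    · simpa [ht] using hz t
  · rcases eq_or_ne t p with rfl | ht
    · simpa [← Jcls_eq_span_classGen] using hp
    · simp [ht, span_atoms]

theorem bracket_eq_zero_of_e_of_classGen {z : Fin (n + 2) → L} (hz : ∀ t, z t ∈ B.atoms)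
    {p q : Fin (n + 2)} (hpq : p ≠ q) {m b : I} (hp : z p = B.e m) (hq : z q ∈ B.classGen b)
    (hbm : ¬ B.Connected b m) : A.bracket z = 0 := by
  rcases hq with ⟨m', hm', hzq⟩ | ⟨⟨c, hc, hzq⟩, -⟩
  · by_contra hnz
    exact hbm (hm'.trans (B.connected_of_bracket_ne_zero
      (fun t => B.atoms_subset_basisOrV (hz t)) hnz hzq.symm hp))
  obtain ⟨u₀, rfl⟩ := Fin.exists_succAbove_eq hpq
  refine (Submodule.mem_bot F).mp (B.bracket_mem_of_entry_eq_bracket hz hzq ⊥ fun i₁ j σ₁ σ₂ => ?_)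
  have hinner : A.bracket (Fin.insertNth j (B.e (c (σ₁ i₁)))
      fun u => z (q.succAbove (σ₂ u))) = 0 := by
    by_contra hnz
    exact hbm ((hc (σ₁ i₁)).trans (B.connected_of_bracket_ne_zero
      (fun t => B.atoms_subset_basisOrV (B.insertNth_e_mem_atoms hz q j _ σ₂ t)) hnz
      (p := j) (q := j.succAbove (σ₂.symm u₀)) (by simp) (by simpa using hp)))
  rw [hinner, MultilinearMap.map_update_zero]
  exact zero_mem _

theorem bracket_eq_zero_of_classGen {z : Fin (n + 2) → L} (hz : ∀ t, z t ∈ B.atoms)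
    {p q : Fin (n + 2)} (hpq : p ≠ q) {a b : I} (hab : ¬ B.Connected a b)
    (hp : z p ∈ B.classGen a) (hq : z q ∈ B.classGen b) : A.bracket z = 0 := by
  rcases hp with ⟨m, hm, hzp⟩ | ⟨⟨c, hc, hzp⟩, -⟩
  · exact B.bracket_eq_zero_of_e_of_classGen hz hpq hzp.symm hq fun hbm => hab (hm.trans hbm.symm)
  obtain ⟨u₀, rfl⟩ := Fin.exists_succAbove_eq hpq.symm
  refine (Submodule.mem_bot F).mp (B.bracket_mem_of_entry_eq_bracket hz hzp ⊥ fun i₁ j σ₁ σ₂ => ?_)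
  have hinner : A.bracket (Fin.insertNth j (B.e (c (σ₁ i₁)))
      fun u => z (p.succAbove (σ₂ u))) = 0 :=
    B.bracket_eq_zero_of_e_of_classGen (B.insertNth_e_mem_atoms hz p j _ σ₂)
      (p := j) (q := j.succAbove (σ₂.symm u₀)) (Fin.succAbove_ne _ _).symm (by simp)
      (by simpa using hq) fun hbm => hab ((hc (σ₁ i₁)).trans hbm.symm)
  rw [hinner, MultilinearMap.map_update_zero]
  exact zero_mem _

theorem bracket_eq_zero_of_not_connected {a b : I} (hab : ¬ B.Connected a b)
    {w : Fin (n + 2) → L} {p q : Fin (n + 2)} (hpq : p ≠ q) (hp : w p ∈ B.Jcls a)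
    (hq : w q ∈ B.Jcls b) : A.bracket w = 0 := by
  classical
  refine (Submodule.mem_bot F).mp (A.bracket.map_mem_of_forall_mem_span
    (s := Function.update (Function.update (fun _ => B.atoms) p (B.classGen a)) q (B.classGen b))
    (fun z hz => ?_) (fun t => ?_))
  · refine (Submodule.mem_bot F).mpr (B.bracket_eq_zero_of_classGen (fun t => ?_) hpq hab
      (by simpa [hpq] using hz p) (by simpa using hz q))
    rcases eq_or_ne t q with rfl | htq
    · exact B.classGen_subset_atoms b (by simpa using hz t)
    rcases eq_or_ne t p with rfl | htp
    · exact B.classGen_subset_atoms a (by simpa [htq] using hz t)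
    · simpa [htp, htq] using hz t
  · rcases eq_or_ne t q with rfl | htq
    · simpa [← Jcls_eq_span_classGen] using hq
    rcases eq_or_ne t p with rfl | htp
    · simpa [htq, ← Jcls_eq_span_classGen] using hp
    · simp [htp, htq, span_atoms]

end Structure

section Decomposition

theorem iSup_Jcls_eq_top (ht : B.Tight) : ⨆ i, B.Jcls i = ⊤ := by
  rw [eq_top_iff, ← B.compl.sup_eq_top, ← B.e_span]
  refine sup_le ?_ (Submodule.span_le.mpr ?_)
  · rcases ht with hV | hV
    · simp [hV]
    rw [hV]
    refine Submodule.span_le.mpr ?_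
    rintro _ ⟨c, -, rfl⟩
    exact le_iSup B.Jcls (c 0) (B.bracket_mem_Jcls_of_basisOrV (fun t => Or.inr ⟨c t, rfl⟩)
      (s := 0) rfl (connected_refl _))
  · rintro _ ⟨j, rfl⟩
    exact le_iSup B.Jcls j ((le_sup_right : B.Wcls j ≤ B.Jcls j)
      (Submodule.subset_span ⟨j, connected_refl j, rfl⟩))

theorem disjoint_Jcls (hc : A.Centerless) (ht : B.Tight) (i : I) :
    Disjoint (B.Jcls i) (⨆ j ∈ {j : I | ¬ B.Connected i j}, B.Jcls j) := by
  classical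
  refine Submodule.disjoint_def.mpr fun x hxi hxo => hc x fun σ y hy => ?_
  set p := σ.symm 0
  set w : Fin (n + 2) → L := fun t => y (σ t)
  have hwp : w p = x := by simp [w, p, hy]
  obtain ⟨q, hqp⟩ := exists_ne p
  suffices key : ⊤ ≤ LinearMap.ker (A.bracket.toLinearMap w q) by
    simpa using key (Submodule.mem_top (x := w q))
  rw [← B.iSup_Jcls_eq_top ht]
  refine iSup_le fun k v hv => ?_
  rw [LinearMap.mem_ker, MultilinearMap.toLinearMap_apply]
  by_cases hik : B.Connected i k
  · have hle : (⨆ j ∈ {j : I | ¬ B.Connected i j}, B.Jcls j) ≤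
        LinearMap.ker (A.bracket.toLinearMap (Function.update w q v) p) :=
      iSup₂_le fun j hj u hu => by
        rw [LinearMap.mem_ker, MultilinearMap.toLinearMap_apply]
        exact B.bracket_eq_zero_of_not_connected (fun hjk => hj (hik.trans hjk.symm))
          hqp.symm (by simpa using hu) (by simpa [hqp] using hv)
    have hx : Function.update w q v p = x := by rw [Function.update_of_ne hqp.symm, hwp]
    have := hle hxo
    rwa [LinearMap.mem_ker, MultilinearMap.toLinearMap_apply, ← hx,
      Function.update_eq_self] at this
  · exact B.bracket_eq_zero_of_not_connected hik hqp.symm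
      (by simpa [hqp.symm, hwp] using hxi) (by simpa using hv)

theorem isIdeal_Jcls (i : I) : A.IsIdeal (B.Jcls i) := by
  refine ColorGLT.isIdeal_of_bracket_mem ?_ fun w p hp => B.bracket_mem_Jcls hp
  rw [B.Jcls_eq_span_classGen]
  exact Submodule.span_eq_iSup_inf_of_forall_exists_mem _
    fun x hx => B.atoms_homogeneous (B.classGen_subset_atoms i hx)

theorem hasInheritedBasis_Jcls (i : I) : B.HasInheritedBasis (B.Jcls i) :=
  ⟨B.Vcls i, B.cls i, inf_le_right, ⟨i, connected_refl i⟩, rfl⟩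

end Decomposition

section Minimality

theorem connected_of_e_mem_Jcls {i j : I} (h : B.e j ∈ B.Jcls i) : B.Connected i j := by
  obtain ⟨v, hv, w, hw, hvw⟩ := Submodule.mem_sup.mp h
  have hwW : w ∈ B.W := B.e_span ▸ Submodule.span_mono (Set.image_subset_range _ _) hw
  have hejW : B.e j ∈ B.W := B.e_span ▸ Submodule.subset_span ⟨j, rfl⟩
  have hv0 : v = 0 := Submodule.disjoint_def.mp B.compl.disjoint v (Submodule.mem_inf.mp hv).2
    (by rw [eq_sub_of_add_eq hvw]; exact sub_mem hejW hwW)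
  rw [hv0, zero_add] at hvw
  by_contra hij
  exact B.e_indep.notMem_span_image hij (hvw ▸ hw)

theorem e_mem_of_step {S : Submodule F L} (hS : A.IsIdeal S) (hmu : B.MuQM) {a b : I}
    (hab : B.Step a b) (ha : B.e a ∈ S) : B.e b ∈ S := by
  obtain ⟨X, h | h⟩ := hab <;>
  · obtain ⟨σ, z, hz, hb⟩ := hmu _ X b h
    have hz0 : z (σ.symm 0) = B.e a := by simpa [fullTup, uSet] using hz (σ.symm 0)
    exact Submodule.span_le.mpr (Set.singleton_subset_iff.mpr (hS.bracket_mem (hz0 ▸ ha))) hb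

theorem e_mem_of_connected {S : Submodule F L} (hS : A.IsIdeal S) (hmu : B.MuQM) {i j : I}
    (hij : B.Connected i j) (hi : B.e i ∈ S) : B.e j ∈ S := by
  rw [connected_iff_reflTransGen] at hij
  induction hij with
  | refl => exact hi
  | tail _ hst ih => exact B.e_mem_of_step hS hmu hst ih

theorem Jcls_le_of_e_mem {S : Submodule F L} (hS : A.IsIdeal S) (hmu : B.MuQM) {i j : I}
    (hij : B.Connected i j) (hj : B.e j ∈ S) : B.Jcls i ≤ S := by
  have hW : B.Wcls i ≤ S := Submodule.span_le.mpr <| by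
    rintro _ ⟨k, hk, rfl⟩
    exact B.e_mem_of_connected hS hmu (hij.symm.trans hk) hj
  refine sup_le (fun x hx => Submodule.span_le.mpr ?_ (Submodule.mem_inf.mp hx).1) hW
  rintro _ ⟨c, hc, rfl⟩
  exact hS.bracket_mem (p := 0) (hW (Submodule.subset_span ⟨c 0, hc 0, rfl⟩))

theorem eq_Jcls_of_le (hmu : B.MuQM) {i : I} {S : Submodule F L} (hle : S ≤ B.Jcls i)
    (hS : A.IsIdeal S) (hb : B.HasInheritedBasis S) : S = B.Jcls i := by
  obtain ⟨V', J', -, ⟨j, hj⟩, rfl⟩ := hb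
  have hjS : B.e j ∈ V' ⊔ Submodule.span F (B.e '' J') :=
    Submodule.mem_sup_right (Submodule.subset_span ⟨j, hj, rfl⟩)
  exact le_antisymm hle (B.Jcls_le_of_e_mem hS hmu (B.connected_of_e_mem_Jcls (hle hjS)) hjS)

end Minimality

end QMBasis

theorem stmt12 {F : Type} [Field F] {G : Type} [AddCommGroup G] [DecidableEq G]
    {L : Type} [AddCommGroup L] [Module F L] {n : ℕ} {I : Type}
    {A : ColorGLT F G L n} (B : QMBasis A I) (hmu : B.MuQM) (hc : A.Centerless)
    (ht : B.Tight) :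
    (⨆ i : I, B.Jcls i) = ⊤ ∧
    (∀ i : I, Disjoint (B.Jcls i) (⨆ j ∈ {j : I | ¬ B.Connected i j}, B.Jcls j)) ∧
    (∀ i : I, A.IsIdeal (B.Jcls i) ∧ B.HasInheritedBasis (B.Jcls i)) ∧
    (∀ (i : I) (S : Submodule F L), S ≠ ⊥ → S ≤ B.Jcls i → A.IsIdeal S →
      B.HasInheritedBasis S → S = B.Jcls i) :=
  ⟨B.iSup_Jcls_eq_top ht, B.disjoint_Jcls hc ht,
    fun i => ⟨B.isIdeal_Jcls i, B.hasInheritedBasis_Jcls i⟩,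
    fun _ _ _ hle hS hb => B.eq_Jcls_of_le hmu hle hS hb⟩
end

section
/- Let L = V ⊕ W be a color gLt-algebra with quasi-multiplicative basis {e_i}_{i∈I} of W ≠ 0. If j ∈ [i] and 0 ≠ ⟨e_j, e_{i₂}, …, e_{iₙ}⟩_σ ∈ V for some i₂,…,iₙ ∈ I and σ ∈ Sₙ, then i₂,…,iₙ ∈ [i]; consequently ⟨e_j, e_{i₂},…,e_{iₙ}⟩_σ ∈ V_{[i]} and ⟨W_{[i]}, (⊕_{r∈I}𝔽e_r), …, (⊕_{s∈I}𝔽e_s)⟩_σ ⊆ 𝔍_{[i]} for all σ. -/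
set_option maxHeartbeats 1000000

/-!
A nonzero product `⟨e_{i₁}, …, e_{iₙ}⟩` lying in `V` exhibits, for any two distinct positions
`s, s'`, the index `i_{s'}` as an element of `μ(ī_s, v, …)`; one landing in `𝔽 e_m` exhibits
`m ∈ μ(i_s, …)`. Since every element of `μ(j, X)` or `μ(j̄, X)` is connected to `j` (extend the
connecting chain by `X`), the class `[i]` absorbs all indices of such products.
-/

theorem Equiv.Perm.exists_apply_eq_and_apply_eq {α : Type*} [DecidableEq α] {x y a b : α}
    (hxy : x ≠ y) (hab : a ≠ b) : ∃ π : Equiv.Perm α, π x = a ∧ π y = b :=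
  ⟨Equiv.swap x a * Equiv.swap y (Equiv.swap x a b), by
    simp only [Equiv.Perm.mul_apply, Equiv.swap_apply_def]
    grind⟩

namespace QMBasis

variable {F : Type} [Field F] {G : Type} [AddCommGroup G] [DecidableEq G]
    {L : Type} [AddCommGroup L] [Module F L] {n : ℕ} {I : Type}
    {A : ColorGLT F G L n}

theorem inl_mem_phi_iff (B : QMBasis A I) (S : Set (I ⊕ I)) (X : Tup I n) (m : I) :
    Sum.inl m ∈ B.phi S X ↔ ∃ j ∈ S, B.muMem (Sum.map some some j) X (some m) :=
  ⟨by rintro ⟨_, h | h, hmu⟩ <;> cases h; exact hmu, fun h => ⟨m, Or.inl rfl, h⟩⟩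

theorem inr_mem_phi_iff (B : QMBasis A I) (S : Set (I ⊕ I)) (X : Tup I n) (m : I) :
    Sum.inr m ∈ B.phi S X ↔ ∃ j ∈ S, B.muMem (Sum.map some some j) X (some m) :=
  ⟨by rintro ⟨_, h | h, hmu⟩ <;> cases h; exact hmu, fun h => ⟨m, Or.inr rfl, h⟩⟩

theorem chain_append_singleton (B : QMBasis A I) (s : Set (I ⊕ I)) (Xs : List (Tup I n))
    (X : Tup I n) : B.chain s (Xs ++ [X]) = B.phi (B.chain s Xs) X := by
  induction Xs generalizing s with
  | nil => rfl
  | cons Y r ih => exact ih (B.phi s Y)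

theorem inr_mem_chain_of_inl_mem (B : QMBasis A I) (s : Set (I ⊕ I)) {Xs : List (Tup I n)}
    (hXs : Xs ≠ []) {m : I} (hm : Sum.inl m ∈ B.chain s Xs) : Sum.inr m ∈ B.chain s Xs := by
  induction Xs generalizing s with
  | nil => exact absurd rfl hXs
  | cons Y r ih =>
    rcases r with _ | ⟨Z, r⟩
    · exact (B.inr_mem_phi_iff s Y m).2 ((B.inl_mem_phi_iff s Y m).1 hm)
    · exact ih (B.phi s Y) (List.cons_ne_nil Z r) hm

theorem Connected.of_muMem {B : QMBasis A I} {i j m : I} {p : I ⊕ I} (X : Tup I n)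
    (hij : B.Connected i j) (hp : p = Sum.inl j ∨ p = Sum.inr j)
    (hmu : B.muMem (Sum.map some some p) X (some m)) : B.Connected i m := by
  right
  rcases hij with rfl | ⟨Xs, st, hXs, hst, hnonempty, hj⟩
  · refine ⟨[X], p, List.cons_ne_nil X [], hp, fun k hk => ?_, (B.inl_mem_phi_iff _ X m).2
      ⟨p, rfl, hmu⟩⟩
    obtain rfl : k = 0 := by simpa using hk
    exact ⟨p, rfl⟩
  · refine ⟨Xs ++ [X], st, by simp, hst, fun k hk => ?_, ?_⟩
    · rw [List.length_append, List.length_singleton] at hk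
      rcases Nat.lt_succ_iff_lt_or_eq.1 hk with hk | rfl
      · rw [List.take_append_of_le_length hk.le]
        exact hnonempty k hk
      · rw [List.take_left]
        exact ⟨Sum.inl j, hj⟩
    · rw [B.chain_append_singleton]
      refine (B.inl_mem_phi_iff _ X m).2 ⟨p, ?_, hmu⟩
      rcases hp with rfl | rfl
      · exact hj
      · exact B.inr_mem_chain_of_inl_mem _ hXs hj

theorem aMem_of_eq_some_comp (B : QMBasis A I) (d : Fin (n + 2) → I)
    (π : Equiv.Perm (Fin (n + 2))) {c : Fin (n + 2) → Option I} (hc : ∀ u, c u = some (d (π u)))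
    {x : Option I} (hne : A.bracket (fun t => B.e (d t)) ≠ 0)
    (hx : A.bracket (fun t => B.e (d t)) ∈ B.targetSet x) : B.aMem π⁻¹ c x := by
  have hz : ∀ z : Fin (n + 2) → L, (∀ t, z t ∈ B.elemSet (c (π⁻¹ t))) ↔
      z = fun t => B.e (d t) := by
    simp [hc, elemSet, funext_iff]
  refine ⟨⟨_, (hz _).2 rfl, hne⟩, fun z h => (hz z).1 h ▸ hx, fun _ => Or.inl fun t => ?_⟩
  simp [hc]

theorem exists_muMem_inr_of_bracket_mem_V (B : QMBasis A I) (d : Fin (n + 2) → I)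
    {s s' : Fin (n + 2)} (hs : s ≠ s') (hne : A.bracket (fun t => B.e (d t)) ≠ 0)
    (hV : A.bracket (fun t => B.e (d t)) ∈ B.V) :
    ∃ X : Tup I n, B.muMem (Sum.inr (some (d s))) X (some (d s')) := by
  obtain ⟨π, hπ0, hπ1⟩ := Equiv.Perm.exists_apply_eq_and_apply_eq (x := 0) (y := 1)
    (by simp) hs.symm
  -- `X = (v, i_{π 2}, …)` with `k = 0`: the entry `v` at `k` is the target `V` of the product.
  refine ⟨(false, Fin.cons none fun t => some (d (π t.succ.succ))), 0, π⁻¹,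
    B.aMem_of_eq_some_comp d π (fun u => ?_) hne hV⟩
  refine Fin.cases ?_ (Fin.cases ?_ fun t => ?_) u <;> simp [hπ0, hπ1]

theorem exists_muMem_inl_of_bracket_mem_span (B : QMBasis A I) (d : Fin (n + 2) → I)
    (s : Fin (n + 2)) {m : I} (hne : A.bracket (fun t => B.e (d t)) ≠ 0)
    (hm : A.bracket (fun t => B.e (d t)) ∈ Submodule.span F {B.e m}) :
    ∃ X : Tup I n, B.muMem (Sum.inl (some (d s))) X (some m) := by
  refine ⟨(false, fun t => some (d (Equiv.swap 0 s t.succ))), Equiv.swap 0 s,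
    B.aMem_of_eq_some_comp d (Equiv.swap 0 s) (fun u => ?_) hne hm⟩
  refine Fin.cases ?_ (fun t => ?_) u <;> simp

theorem forall_mem_cls_of_bracket_mem_V (B : QMBasis A I) {i : I} (c : Fin (n + 2) → I)
    (σ : Equiv.Perm (Fin (n + 2))) (h0 : c 0 ∈ B.cls i)
    (hne : A.bracket (fun t => B.e (c (σ t))) ≠ 0)
    (hV : A.bracket (fun t => B.e (c (σ t))) ∈ B.V) : ∀ t, c t ∈ B.cls i := by
  intro t
  rcases eq_or_ne t 0 with rfl | ht
  · exact h0
  obtain ⟨X, hmu⟩ := B.exists_muMem_inr_of_bracket_mem_V (fun t => c (σ t))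
    (σ.symm.injective.ne ht.symm) hne hV
  simp only [Equiv.apply_symm_apply] at hmu
  exact Connected.of_muMem (p := Sum.inr (c 0)) X h0 (Or.inr rfl) hmu

theorem mem_cls_of_bracket_mem_span (B : QMBasis A I) {i m : I} (c : Fin (n + 2) → I)
    (σ : Equiv.Perm (Fin (n + 2))) (h0 : c 0 ∈ B.cls i)
    (hne : A.bracket (fun t => B.e (c (σ t))) ≠ 0)
    (hm : A.bracket (fun t => B.e (c (σ t))) ∈ Submodule.span F {B.e m}) : m ∈ B.cls i := by
  obtain ⟨X, hmu⟩ := B.exists_muMem_inl_of_bracket_mem_span (fun t => c (σ t)) (σ⁻¹ 0) hne hm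
  simp only [Equiv.Perm.coe_inv, Equiv.apply_symm_apply] at hmu
  exact Connected.of_muMem (p := Sum.inl (c 0)) X h0 (Or.inl rfl) hmu

theorem bracket_mem_Vcls (B : QMBasis A I) {i : I} {c : Fin (n + 2) → I}
    (hc : ∀ t, c t ∈ B.cls i) (hV : A.bracket (fun t => B.e (c t)) ∈ B.V) :
    A.bracket (fun t => B.e (c t)) ∈ B.Vcls i :=
  ⟨Submodule.subset_span ⟨c, hc, rfl⟩, hV⟩

end QMBasis

theorem stmt15 {F : Type} [Field F] {G : Type} [AddCommGroup G] [DecidableEq G]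
    {L : Type} [AddCommGroup L] [Module F L] {n : ℕ} {I : Type}
    {A : ColorGLT F G L n} (B : QMBasis A I) (i : I) :
    (∀ (c : Fin (n + 2) → I) (σ : Equiv.Perm (Fin (n + 2))), c 0 ∈ B.cls i →
      A.bracket (fun t => B.e (c (σ t))) ≠ 0 →
      A.bracket (fun t => B.e (c (σ t))) ∈ B.V →
      (∀ t, c t ∈ B.cls i) ∧ A.bracket (fun t => B.e (c (σ t))) ∈ B.Vcls i) ∧
    (∀ (c : Fin (n + 2) → I) (σ : Equiv.Perm (Fin (n + 2))), c 0 ∈ B.cls i →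
      A.bracket (fun t => B.e (c (σ t))) ∈ B.Jcls i) := by
  have bracket_mem_Vcls : ∀ (c : Fin (n + 2) → I) (σ : Equiv.Perm (Fin (n + 2))),
      c 0 ∈ B.cls i → A.bracket (fun t => B.e (c (σ t))) ≠ 0 →
      A.bracket (fun t => B.e (c (σ t))) ∈ B.V →
      A.bracket (fun t => B.e (c (σ t))) ∈ B.Vcls i := fun c σ h0 hne hV =>
    B.bracket_mem_Vcls (fun t => B.forall_mem_cls_of_bracket_mem_V c σ h0 hne hV (σ t)) hV
  refine ⟨fun c σ h0 hne hV => ⟨B.forall_mem_cls_of_bracket_mem_V c σ h0 hne hV,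
    bracket_mem_Vcls c σ h0 hne hV⟩, fun c σ h0 => ?_⟩
  rcases eq_or_ne (A.bracket fun t => B.e (c (σ t))) 0 with h | hne
  · exact h ▸ zero_mem _
  rcases B.qm1 (fun t => c (σ t)) with ⟨m, hm⟩ | hV
  · have hem : B.e m ∈ B.Wcls i :=
      Submodule.subset_span ⟨m, B.mem_cls_of_bracket_mem_span c σ h0 hne hm, rfl⟩
    exact Submodule.mem_sup_right ((Submodule.span_singleton_le_iff_mem _ _).2 hem hm)
  · exact Submodule.mem_sup_left (bracket_mem_Vcls c σ h0 hne hV)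
end

section
/- Let L = V ⊕ W be a color gLt-algebra with quasi-multiplicative basis, and let i, h ∈ I with [i] ≠ [h]. Then for any i' ∈ [i], h' ∈ [h], k₃,…,kₙ ∈ I and σ ∈ Sₙ, the product ⟨e_{i'}, e_{h'}, e_{k₃}, …, e_{kₙ}⟩_σ cannot be a nonzero element of V; i.e. if it is nonzero it lies in some 𝔽e_m, and in fact it must be zero. -/
set_option maxHeartbeats 1000000

/-!
If the product `⟨e_{i'}, e_{h'}, e_{k₃}, …⟩_σ` were nonzero, quasi-multiplicativity would put it
in some `𝔽 e_m` or in `V`, i.e. `i' ∈ μ(h̄', (m, k₃, …, kₙ))`, and `h'` would be connected to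
`i'`. Connection is the reflexive-transitive closure of a symmetric one-step relation, hence an
equivalence, and then `[i] = [h]`.
-/

lemma Sum.elim_id_id_eq_iff {α : Type*} {p : α ⊕ α} {a : α} :
    Sum.elim id id p = a ↔ p = Sum.inl a ∨ p = Sum.inr a := by
  cases p <;> simp

namespace QMBasis

variable {F : Type} [Field F] {G : Type} [AddCommGroup G] [DecidableEq G]
    {L : Type} [AddCommGroup L] [Module F L] {n : ℕ} {I : Type}
    {A : ColorGLT F G L n} (B : QMBasis A I)

/-- One step of a connection: `j ∈ μ(i, X)` or `j ∈ μ(ī, X)` for some admissible `X`. -/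
def Adj (i j : I) : Prop :=
  ∃ p : I ⊕ I, Sum.elim id id p = i ∧ ∃ X : Tup I n, B.muMem (Sum.map some some p) X (some j)

lemma mem_phi_iff {s : Set (I ⊕ I)} {X : Tup I n} {q : I ⊕ I} :
    q ∈ B.phi s X ↔ ∃ p ∈ s, B.muMem (Sum.map some some p) X (some (Sum.elim id id q)) := by
  constructor
  · rintro ⟨i, (rfl | rfl), p, hp, hmu⟩ <;> exact ⟨p, hp, hmu⟩
  · rintro ⟨p, hp, hmu⟩
    exact ⟨_, Sum.elim_id_id_eq_iff.mp rfl, p, hp, hmu⟩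

lemma chain_append (s : Set (I ⊕ I)) (l₁ l₂ : List (Tup I n)) :
    B.chain s (l₁ ++ l₂) = B.chain (B.chain s l₁) l₂ := by
  induction l₁ generalizing s with
  | nil => rfl
  | cons X r ih => exact ih _

lemma chain_empty (l : List (Tup I n)) : B.chain ∅ l = ∅ := by
  induction l with
  | nil => rfl
  | cons X r ih =>
    have : B.phi ∅ X = ∅ := by simp [phi]
    simp only [chain, this, ih]

lemma chain_take_nonempty {s : Set (I ⊕ I)} {l : List (Tup I n)} (h : (B.chain s l).Nonempty)
    (m : ℕ) : (B.chain s (l.take m)).Nonempty := by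
  rw [← List.take_append_drop m l, chain_append] at h
  by_contra hm
  rw [Set.not_nonempty_iff_eq_empty.mp hm, chain_empty] at h
  exact Set.not_nonempty_empty h

lemma transGen_adj_of_mem_chain {l : List (Tup I n)} (hl : l ≠ []) {s : Set (I ⊕ I)}
    {q : I ⊕ I} (hq : q ∈ B.chain s l) :
    ∃ p ∈ s, Relation.TransGen B.Adj (Sum.elim id id p) (Sum.elim id id q) := by
  induction l generalizing s with
  | nil => exact absurd rfl hl
  | cons X r ih =>
    rcases eq_or_ne r [] with rfl | hr
    · obtain ⟨p, hp, hmu⟩ := (B.mem_phi_iff).mp hq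
      exact ⟨p, hp, .single ⟨p, rfl, X, hmu⟩⟩
    · obtain ⟨p', hp', hpath⟩ := ih hr hq
      obtain ⟨p, hp, hmu⟩ := (B.mem_phi_iff).mp hp'
      exact ⟨p, hp, .head ⟨p, rfl, X, hmu⟩ hpath⟩

lemma exists_mem_chain_of_transGen_adj {i j : I} (h : Relation.TransGen B.Adj i j) :
    ∃ (st : I ⊕ I) (l : List (Tup I n)), Sum.elim id id st = i ∧ l ≠ [] ∧
      ∀ q : I ⊕ I, Sum.elim id id q = j → q ∈ B.chain {st} l := by
  induction h with
  | single hij =>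
    obtain ⟨p, hp, X, hmu⟩ := hij
    refine ⟨p, [X], hp, List.cons_ne_nil _ _, fun q hq => ?_⟩
    exact (B.mem_phi_iff).mpr ⟨p, rfl, hq ▸ hmu⟩
  | tail _ hjk ih =>
    obtain ⟨st, l, hst, hl, hmem⟩ := ih
    obtain ⟨p, hp, X, hmu⟩ := hjk
    refine ⟨st, l ++ [X], hst, by simp, fun q hq => ?_⟩
    rw [chain_append]
    exact (B.mem_phi_iff).mpr ⟨p, hmem p hp, hq ▸ hmu⟩

lemma connected_iff_reflTransGen_adj {i j : I} :
    B.Connected i j ↔ Relation.ReflTransGen B.Adj i j := by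
  rw [Relation.reflTransGen_iff_eq_or_transGen, eq_comm, Connected]
  refine or_congr_right ⟨?_, fun h => ?_⟩
  · rintro ⟨l, st, hl, hst, -, hj⟩
    obtain ⟨p, rfl, hpath⟩ := B.transGen_adj_of_mem_chain hl hj
    rwa [← Sum.elim_id_id_eq_iff.mpr hst]
  · obtain ⟨st, l, hst, hl, hmem⟩ := B.exists_mem_chain_of_transGen_adj h
    have hj := hmem (Sum.inl j) rfl
    exact ⟨l, st, hl, Sum.elim_id_id_eq_iff.mp hst,
      fun m _ => B.chain_take_nonempty ⟨_, hj⟩ m, hj⟩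

lemma aMem_comp_perm {σ : Equiv.Perm (Fin (n + 2))} {c : Fin (n + 2) → Option I}
    {x : Option I} (h : B.aMem σ c x) (τ : Equiv.Perm (Fin (n + 2))) :
    B.aMem (σ.trans τ.symm) (c ∘ τ) x := by
  obtain ⟨⟨z, hz, hz0⟩, hall, hnone⟩ := h
  refine ⟨⟨z, fun t => by simpa using hz t, hz0⟩,
    fun z' hz' => hall z' fun t => by simpa using hz' t, fun hx => ?_⟩
  rcases hnone hx with h | h
  exacts [Or.inl fun t => h (τ t), Or.inr fun t => h (τ t)]

lemma adj_symm {i j : I} (h : B.Adj i j) : B.Adj j i := by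
  obtain ⟨p, rfl, ⟨b, c⟩, hmu⟩ := h
  rcases p with i | i <;> rcases b
  · exact ⟨Sum.inl j, rfl, (true, c), hmu⟩
  · exact ⟨Sum.inl j, rfl, (false, c), hmu⟩
  · obtain ⟨k, σ, ha⟩ := hmu
    refine ⟨Sum.inr j, rfl, (false, c), k, σ.trans (Equiv.swap 0 1).symm, ?_⟩
    convert B.aMem_comp_perm ha (Equiv.swap 0 1) using 2
    exact (Matrix.cons_cons_comp_swap_zero_one _ _ _).symm
  · exact hmu.elim

lemma connected_equivalence : Equivalence B.Connected := by
  have : Std.Symm B.Adj := ⟨fun _ _ => B.adj_symm⟩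
  have hrel : B.Connected = Relation.ReflTransGen B.Adj := by
    ext; exact B.connected_iff_reflTransGen_adj
  rw [hrel]
  exact ⟨fun _ => .refl, fun h => Std.Symm.symm _ _ h, .trans⟩

lemma cls_eq_of_connected {i j : I} (h : B.Connected i j) : B.cls i = B.cls j :=
  Set.ext fun _ => ⟨B.connected_equivalence.trans (B.connected_equivalence.symm h),
    B.connected_equivalence.trans h⟩

lemma exists_aMem_of_bracket_ne_zero (c : Fin (n + 2) → I) (σ : Equiv.Perm (Fin (n + 2)))
    (h : A.bracket (fun t => B.e (c (σ t))) ≠ 0) : ∃ x, B.aMem σ (fun t => some (c t)) x := by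
  have hz : ∀ z : Fin (n + 2) → L, (∀ t, z t ∈ B.elemSet (some (c (σ t)))) →
      z = fun t => B.e (c (σ t)) := fun z hz => funext hz
  rcases B.qm1 (fun t => c (σ t)) with ⟨j, hj⟩ | hV
  · exact ⟨some j, ⟨_, fun _ => rfl, h⟩, fun z hzc => hz z hzc ▸ hj,
      fun hj => (Option.some_ne_none j hj).elim⟩
  · exact ⟨none, ⟨_, fun _ => rfl, h⟩, fun z hzc => hz z hzc ▸ hV,
      fun _ => Or.inl fun _ => rfl⟩

lemma adj_of_aMem {c : Fin (n + 2) → I} {σ : Equiv.Perm (Fin (n + 2))} {x : Option I}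
    (h : B.aMem σ (fun t => some (c t)) x) : B.Adj (c 1) (c 0) := by
  refine ⟨Sum.inr (c 1), rfl, (false, Fin.cons x fun s => some (c s.succ.succ)), 0, σ, ?_⟩
  convert h using 3 with t
  · exact Fin.cases rfl (Fin.cases rfl fun _ => rfl) t
  · exact Fin.cons_zero _ _

end QMBasis

theorem stmt17 {F : Type} [Field F] {G : Type} [AddCommGroup G] [DecidableEq G]
    {L : Type} [AddCommGroup L] [Module F L] {n : ℕ} {I : Type}
    {A : ColorGLT F G L n} (B : QMBasis A I) (i h : I) (hne : B.cls i ≠ B.cls h)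
    (i' h' : I) (hi' : i' ∈ B.cls i) (hh' : h' ∈ B.cls h)
    (c : Fin (n + 2) → I) (σ : Equiv.Perm (Fin (n + 2)))
    (hc0 : c 0 = i') (hc1 : c 1 = h') :
    ¬(A.bracket (fun t => B.e (c (σ t))) ≠ 0 ∧
        A.bracket (fun t => B.e (c (σ t))) ∈ B.V) ∧
      A.bracket (fun t => B.e (c (σ t))) = 0 := by
  have hzero : A.bracket (fun t => B.e (c (σ t))) = 0 := by
    by_contra hnz
    obtain ⟨x, hx⟩ := B.exists_aMem_of_bracket_ne_zero c σ hnz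
    have hh'i' : B.Connected h' i' := by
      rw [B.connected_iff_reflTransGen_adj, ← hc0, ← hc1]
      exact .single (B.adj_of_aMem hx)
    have hequiv := B.connected_equivalence
    exact hne (B.cls_eq_of_connected
      (hequiv.trans hi' (hequiv.symm (hequiv.trans hh' hh'i'))))
  exact ⟨fun hnz => hnz.1 hzero, hzero⟩
end
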